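/- With v an a-Sturmian word written v = a^{l₀} b a^{l+ε₁} b a^{l+ε₂} b ⋯ and F the cellular automaton of radius l+1 mapping a^{l+1} to a and every other word of length l+1 to b, the image word F(v) is 2-balanced: for every letter x and all factors v₁, v₂ of F(v) of equal length, ||v₁|_x − |v₂|_x| ≤ 2, and the bound 2 is attained. -/

import Mathlib

/-- The window of length `n` of an infinite word `u` starting at position `i`. -/
def window {A : Type*} (u : ℕ → A) (i n : ℕ) : List A :=
  (List.range n).map (fun j => u (i + j))

/-- `w` is a (finite) factor of the infinite word `u`. -/
def IsFactor {A : Type*} (u : ℕ → A) (w : List A) : Prop :=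
  ∃ i, w = window u i w.length

/-- The cellular automaton with local rule `f` of radius `r`, on finite words. -/
def caF {A B : Type*} (f : List A → B) (r : ℕ) (w : List A) : List B :=
  (List.range (w.length + 1 - r)).map (fun i => f ((w.drop i).take r))

/-- The cellular automaton with local rule `f` of radius `r`, on infinite words. -/
def caFInf {A B : Type*} (f : List A → B) (r : ℕ) (u : ℕ → A) : ℕ → B :=
  fun i => f (window u i r)

/-- The set of factors of length `n` of `u`. -/
def factorsOfLen {A : Type*} (u : ℕ → A) (n : ℕ) : Set (List A) :=
  {w | w.length = n ∧ IsFactor u w}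

/-- The factor complexity function. -/
noncomputable def complexity {A : Type*} (u : ℕ → A) (n : ℕ) : ℕ :=
  Nat.card (factorsOfLen u n)

/-- The prefix of the a-Sturmian word `a^(l₀) b a^(l+ε₁) b ⋯ a^(l+εₙ) b`. -/
def sturmPrefix (l₀ l : ℕ) (ε : ℕ → ℕ) (n : ℕ) : List Bool :=
  (List.replicate l₀ true ++ [false]) ++
    ((List.range n).map (fun i => List.replicate (l + ε (i + 1)) true ++ [false])).flatten

/-- The local rule sending `a^(l+1)` to `a` and every other block to `b`
(`true` = a, `false` = b). -/
def sturmRule (l : ℕ) : List Bool → Bool :=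
  fun w => if w = List.replicate (l + 1) true then true else false

/-!
Past its first `b`, the word `v` is cut by its letters `b` into runs `a^(l+εₖ)`, and `F(v)` has
an `a` exactly at the start of each run `a^(l+1)`. A factor of `F(v)` lying past the first `b`
therefore contains as many `a`s as there are `εₖ = 1` among the runs starting inside it. If two
factors of length `n` meet `R` and `r` runs with `R ≥ r + 2`, comparing `n` with the lengths of
`r + 1` consecutive runs shows that one stretch of `r + 1` consecutive `εₖ` contains two more
`1`s than another, which is impossible because the Sturmian word `ε` is balanced; so `R ≤ r + 1`,
and balance of `ε` gives the bound `2`. Since `v` is Sturmian, hence recurrent, every factor of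
`F(v)` occurs past the first `b`. The bound is attained because consecutive `1`s of `ε` are
separated by gaps of two different lengths (otherwise `ε` would be eventually periodic): a factor
of `F(v)` spanning a short gap has two `a`s, one of the same length inside a long gap has none.

That Sturmian words are balanced is proved in the classical way. An unbalanced binary word
contains factors `0t0` and `1t1`, so `t` is right special; in a Sturmian word `u` the right
special factors are unique, so the one of length `|t| + 1` is `x t` for some letter `x`, and
`!x t !x` occurs. Windows of length `|t| + 1` other than `x t` have a unique successor. Take a
visit of `x t` after which `!x t` occurs before the next visit of `x t`: the windows in between
pass through `t x` and `t !x`, hence through every factor of length `|t| + 1`, each once, so there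
are exactly `|t| + 1` of them. Counting the letters `x` in `x t x` and in `t !x` along this path
gives a contradiction.
-/

section Window

variable {A : Type*} (u : ℕ → A)

@[simp] lemma window_length (i n : ℕ) : (window u i n).length = n := by simp [window]

@[simp] lemma window_zero (i : ℕ) : window u i 0 = [] := rfl

lemma window_add (i a b : ℕ) : window u i (a + b) = window u i a ++ window u (i + a) b := by
  simp [window, List.range_add, add_assoc]

lemma window_succ (i n : ℕ) : window u i (n + 1) = window u i n ++ [u (i + n)] := by
  rw [window_add]; simp [window]

lemma window_succ' (i n : ℕ) : window u i (n + 1) = u i :: window u (i + 1) n := by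
  rw [add_comm n, window_add]; simp [window]

lemma window_add_one (i n : ℕ) : window u (i + 1) n = (window u i n ++ [u (i + n)]).tail := by
  rw [← window_succ, window_succ']; rfl

lemma window_take {i n a : ℕ} (h : a ≤ n) : (window u i n).take a = window u i a := by
  rw [window, ← List.map_take, List.take_range, min_eq_left h, window]

lemma window_drop (i n a : ℕ) : (window u i n).drop a = window u (i + a) (n - a) := by
  rcases le_total a n with h | h
  · conv_lhs => rw [← Nat.add_sub_cancel' h, window_add]
    simp
  · simp [List.drop_eq_nil_of_le, h, Nat.sub_eq_zero_of_le h]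

lemma isFactor_window (i n : ℕ) : IsFactor u (window u i n) := ⟨i, by simp⟩

variable {u}

lemma map_window {B : Type*} (f : A → B) (i n : ℕ) :
    (window u i n).map f = window (fun k => f (u k)) i n := by
  simp [window]

lemma window_eq_window_iff {u' : ℕ → A} {i j n : ℕ} :
    window u i n = window u' j n ↔ ∀ d < n, u (i + d) = u' (j + d) := by
  simp [List.ext_get_iff, window]

lemma window_eq_replicate_iff {a : A} {i n : ℕ} :
    window u i n = List.replicate n a ↔ ∀ d < n, u (i + d) = a := by
  simp [List.eq_replicate_iff, window]

lemma IsFactor.infix {w w' : List A} (h : IsFactor u w) (hw : w' <:+: w) : IsFactor u w' := by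
  obtain ⟨i, hi⟩ := h
  obtain ⟨s, t, rfl⟩ := hw
  refine ⟨i + s.length, ?_⟩
  have := congrArg (fun w => (w.drop s.length).take w'.length) hi
  simpa [window_drop, window_take] using this

lemma mem_factorsOfLen {w : List A} {n : ℕ} :
    w ∈ factorsOfLen u n ↔ ∃ i, window u i n = w := by
  constructor
  · rintro ⟨rfl, i, hi⟩
    exact ⟨i, hi.symm⟩
  · rintro ⟨i, rfl⟩
    exact ⟨by simp, isFactor_window u i n⟩

end Window

section Complexity

variable {A : Type*} {u : ℕ → A}

lemma complexity_eq_ncard (u : ℕ → A) (n : ℕ) : complexity u n = (factorsOfLen u n).ncard :=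
  Nat.card_coe_set_eq _

lemma factorsOfLen_zero (u : ℕ → A) : factorsOfLen u 0 = {[]} := by
  ext w
  simp [mem_factorsOfLen, eq_comm]

lemma factorsOfLen_eq_image_take (u : ℕ → A) (n : ℕ) :
    factorsOfLen u n = List.take n '' factorsOfLen u (n + 1) := by
  ext w
  simp only [mem_factorsOfLen, Set.mem_image]
  constructor
  · rintro ⟨i, rfl⟩
    exact ⟨_, ⟨i, rfl⟩, window_take u (by omega)⟩
  · rintro ⟨_, ⟨i, rfl⟩, rfl⟩
    exact ⟨i, (window_take u (by omega)).symm⟩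

lemma Set.Finite.factorsOfLen_of_le {m n : ℕ} (hfin : (factorsOfLen u n).Finite) (h : m ≤ n) :
    (factorsOfLen u m).Finite := by
  induction n, h using Nat.le_induction with
  | base => exact hfin
  | succ n _ ih => exact ih (by rw [factorsOfLen_eq_image_take u n]; exact hfin.image _)

lemma ncard_factorsOfLen_mono {m n : ℕ} (h : m ≤ n) (hfin : (factorsOfLen u n).Finite) :
    (factorsOfLen u m).ncard ≤ (factorsOfLen u n).ncard := by
  induction n, h using Nat.le_induction with
  | base => rfl
  | succ n _ ih =>
    refine (ih (hfin.factorsOfLen_of_le n.le_succ)).trans ?_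
    rw [factorsOfLen_eq_image_take u n]
    exact Set.ncard_image_le hfin

section Stall

variable {k : ℕ} (hfin : (factorsOfLen u (k + 1)).Finite)
  (hk : (factorsOfLen u (k + 1)).ncard ≤ (factorsOfLen u k).ncard)
include hfin hk

-- `take k` maps the factors of length `k + 1` onto those of length `k`, hence injectively.
lemma apply_add_eq_of_ncard_le {i j : ℕ} (h : window u i k = window u j k) :
    u (i + k) = u (j + k) := by
  have hinj : Set.InjOn (List.take k) (factorsOfLen u (k + 1)) := by
    refine Set.injOn_of_ncard_image_eq (le_antisymm (Set.ncard_image_le hfin) ?_) hfin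
    rwa [← factorsOfLen_eq_image_take]
  have := hinj (mem_factorsOfLen.2 ⟨i, rfl⟩) (mem_factorsOfLen.2 ⟨j, rfl⟩)
    (by simp [window_take, h])
  simpa [window_succ, h] using this

lemma window_add_eq_of_ncard_le {i j : ℕ} (h : window u i k = window u j k) (d : ℕ) :
    window u (i + d) k = window u (j + d) k := by
  induction d with
  | zero => simpa using h
  | succ d ih =>
    have := congrArg List.tail (show window u (i + d) (k + 1) = window u (j + d) (k + 1) by
      rw [window_succ, window_succ, ih, apply_add_eq_of_ncard_le hfin hk ih])
    simpa [window_succ', ← add_assoc] using this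

end Stall

def IsEventuallyPeriodic (u : ℕ → A) : Prop :=
  ∃ N P, 0 < P ∧ ∀ k, N ≤ k → u (k + P) = u k

lemma complexity_le_of_eventually_periodic {N P : ℕ} (hP : 0 < P)
    (h : ∀ k, N ≤ k → u (k + P) = u k) (n : ℕ) : complexity u n ≤ N + P := by
  classical
  have key : ∀ i, ∃ i' < N + P, window u i' n = window u i n := by
    intro i
    induction i using Nat.strong_induction_on with
    | _ i ih =>
      rcases Nat.lt_or_ge i (N + P) with hi | hi
      · exact ⟨i, hi, rfl⟩
      · obtain ⟨i', hi', he⟩ := ih (i - P) (by omega)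
        refine ⟨i', hi', he.trans (window_eq_window_iff.2 fun d _ => ?_)⟩
        rw [← h (i - P + d) (by omega)]
        congr 1
        omega
  have hsub : factorsOfLen u n ⊆ (Finset.range (N + P)).image (fun i => window u i n) := by
    intro w hw
    obtain ⟨i, rfl⟩ := mem_factorsOfLen.1 hw
    obtain ⟨i', hi', he⟩ := key i
    simpa using ⟨i', hi', he⟩
  rw [complexity_eq_ncard]
  calc (factorsOfLen u n).ncard
      ≤ ((Finset.range (N + P)).image (fun i => window u i n) : Set (List A)).ncard :=
        Set.ncard_le_ncard hsub (Finset.finite_toSet _)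
    _ ≤ N + P := by rw [Set.ncard_coe_finset]; exact Finset.card_image_le.trans (by simp)

/-- Morse–Hedlund: the complexity stalls at some `k < K`, and then the first `K + 1` windows of
length `k` contain two equal ones, which stay equal forever. -/
lemma isEventuallyPeriodic_of_ncard_le {K : ℕ} (hfin : (factorsOfLen u K).Finite)
    (hK : (factorsOfLen u K).ncard ≤ K) : IsEventuallyPeriodic u := by
  obtain ⟨k, hkK, hstall⟩ : ∃ k < K,
      (factorsOfLen u (k + 1)).ncard ≤ (factorsOfLen u k).ncard := by
    by_contra! hgrow
    have : ∀ k ≤ K, k + 1 ≤ (factorsOfLen u k).ncard := by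
      intro k hk
      induction k with
      | zero => simp [factorsOfLen_zero]
      | succ k ih => have := hgrow k (by omega); have := ih (by omega); omega
    have := this K le_rfl
    omega
  have hfink := hfin.factorsOfLen_of_le hkK.le
  have hfink' := hfin.factorsOfLen_of_le hkK
  have hmono := ncard_factorsOfLen_mono hkK.le hfin
  obtain ⟨i, hi, j, hj, hne, hij⟩ : ∃ i ∈ Finset.range (K + 1), ∃ j ∈ Finset.range (K + 1),
      i ≠ j ∧ window u i k = window u j k := by
    refine Finset.exists_ne_map_eq_of_card_lt_of_maps_to (t := hfink.toFinset) ?_ ?_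
    · rw [← Set.ncard_eq_toFinset_card _ hfink]; simp; omega
    · intro i _; simpa using mem_factorsOfLen.2 ⟨i, rfl⟩
  wlog hlt : i < j generalizing i j
  · exact this j hj i hi hne.symm hij.symm (by omega)
  refine ⟨i + k, j - i, by omega, fun p hp => ?_⟩
  have := apply_add_eq_of_ncard_le hfink' hstall
    (window_add_eq_of_ncard_le hfink' hstall hij (p - (i + k)))
  convert this.symm using 2 <;> omega

end Complexity

def IsSturmian {A : Type*} (u : ℕ → A) : Prop := ∀ n, complexity u n = n + 1

namespace IsSturmian

variable {A : Type*} {u : ℕ → A}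

lemma finite_factorsOfLen (hu : IsSturmian u) (n : ℕ) : (factorsOfLen u n).Finite := by
  by_contra h
  have := hu n
  rw [complexity_eq_ncard, Set.Infinite.ncard h] at this
  omega

lemma not_isEventuallyPeriodic (hu : IsSturmian u) : ¬ IsEventuallyPeriodic u := by
  rintro ⟨N, P, hP, h⟩
  have := complexity_le_of_eventually_periodic hP h (N + P)
  rw [hu] at this
  omega

-- Otherwise the suffix of `u` from `N` on has at most `|w|` factors of length `|w|`.
lemma exists_window_eq (hu : IsSturmian u) {w : List A} (hw : IsFactor u w) (N : ℕ) :
    ∃ i, N ≤ i ∧ window u i w.length = w := by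
  by_contra! hno
  set v : ℕ → A := fun k => u (N + k)
  have hsub : factorsOfLen v w.length ⊆ factorsOfLen u w.length \ {w} := by
    intro w' hw'
    obtain ⟨j, rfl⟩ := mem_factorsOfLen.1 hw'
    have hj : window v j w.length = window u (N + j) w.length := by
      simp [window, v, add_assoc]
    rw [hj]
    exact ⟨mem_factorsOfLen.2 ⟨_, rfl⟩, hno _ (by omega)⟩
  have hfin := (hu.finite_factorsOfLen w.length).sdiff (t := {w})
  obtain ⟨M, P, hP, hper⟩ := isEventuallyPeriodic_of_ncard_le (hfin.subset hsub) <| by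
    refine (Set.ncard_le_ncard hsub hfin).trans ?_
    obtain ⟨i, hi⟩ := hw
    rw [Set.ncard_sdiff_singleton_of_mem (mem_factorsOfLen.2 ⟨i, hi.symm⟩),
      ← complexity_eq_ncard, hu]
    omega
  exact hu.not_isEventuallyPeriodic ⟨N + M, P, hP, fun k hk => by
    simpa [v, show N + (k - N) = k by omega, ← add_assoc] using hper (k - N) (by omega)⟩

lemma comp {B : Type*} (hu : IsSturmian u) {f : A → B} (hf : Set.InjOn f (Set.range u)) :
    IsSturmian fun k => f (u k) := by
  intro n
  have himage : factorsOfLen (fun k => f (u k)) n = List.map f '' factorsOfLen u n := by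
    ext w
    simp only [mem_factorsOfLen, Set.mem_image]
    constructor
    · rintro ⟨i, rfl⟩; exact ⟨_, ⟨i, rfl⟩, map_window f i n⟩
    · rintro ⟨_, ⟨i, rfl⟩, rfl⟩; exact ⟨i, (map_window f i n).symm⟩
  rw [complexity_eq_ncard, himage, Set.InjOn.ncard_image, ← complexity_eq_ncard, hu]
  intro w₁ hw₁ w₂ hw₂ h
  obtain ⟨i, rfl⟩ := mem_factorsOfLen.1 hw₁
  obtain ⟨j, rfl⟩ := mem_factorsOfLen.1 hw₂
  rw [map_window, map_window, window_eq_window_iff] at h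
  exact window_eq_window_iff.2 fun d hd => hf ⟨_, rfl⟩ ⟨_, rfl⟩ (h d hd)

end IsSturmian

section RightSpecial

def IsRightSpecial (u : ℕ → Bool) (w : List Bool) : Prop :=
  IsFactor u (w ++ [false]) ∧ IsFactor u (w ++ [true])

variable {u : ℕ → Bool}

lemma ncard_factorsOfLen_succ {n : ℕ} (hfin : (factorsOfLen u n).Finite) :
    (factorsOfLen u (n + 1)).ncard =
      (factorsOfLen u n).ncard + {w | w.length = n ∧ IsRightSpecial u w}.ncard := by
  set E : Bool → Set (List Bool) := fun b => {w | w.length = n ∧ IsFactor u (w ++ [b])}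
  have hE : ∀ b, E b ⊆ factorsOfLen u n := fun b w hw =>
    ⟨hw.1, hw.2.infix ⟨[], [b], by simp⟩⟩
  have hsucc : factorsOfLen u (n + 1) = (· ++ [false]) '' E false ∪ (· ++ [true]) '' E true := by
    ext w
    simp only [Set.mem_union, Set.mem_image, mem_factorsOfLen]
    constructor
    · rintro ⟨i, rfl⟩
      rw [window_succ]
      cases h : u (i + n)
      · exact .inl ⟨_, ⟨by simp, by rw [← h, ← window_succ]; exact isFactor_window u i _⟩, rfl⟩
      · exact .inr ⟨_, ⟨by simp, by rw [← h, ← window_succ]; exact isFactor_window u i _⟩, rfl⟩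
    · rintro (⟨w, ⟨hl, i, hi⟩, rfl⟩ | ⟨w, ⟨hl, i, hi⟩, rfl⟩) <;>
        exact ⟨i, by simpa [hl] using hi.symm⟩
  have hunion : E false ∪ E true = factorsOfLen u n := by
    refine Set.Subset.antisymm (Set.union_subset (hE _) (hE _)) fun w hw => ?_
    obtain ⟨i, rfl⟩ := mem_factorsOfLen.1 hw
    have : IsFactor u (window u i n ++ [u (i + n)]) := by
      rw [← window_succ]; exact isFactor_window u i _
    cases h : u (i + n) <;> rw [h] at this
    exacts [.inl ⟨by simp, this⟩, .inr ⟨by simp, this⟩]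
  have hinter : E false ∩ E true = {w | w.length = n ∧ IsRightSpecial u w} := by
    ext w
    simp only [E, Set.mem_inter_iff, Set.mem_ofPred_eq, IsRightSpecial]
    tauto
  have hfinE : ∀ b, (E b).Finite := fun b => hfin.subset (hE b)
  rw [hsucc, Set.ncard_union_eq _ ((hfinE _).image _) ((hfinE _).image _),
    Set.ncard_image_of_injective _ (List.append_left_injective _),
    Set.ncard_image_of_injective _ (List.append_left_injective _), ← hunion, ← hinter,
    Set.ncard_union_add_ncard_inter _ _ (hfinE _) (hfinE _)]
  rw [Set.disjoint_left]
  rintro _ ⟨w, -, rfl⟩ ⟨w', -, h⟩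
  simpa using congrArg List.getLast? h

lemma eq_of_isFactor_append_of_not_isRightSpecial {w : List Bool} {a b : Bool}
    (hns : ¬ IsRightSpecial u w) (ha : IsFactor u (w ++ [a])) (hb : IsFactor u (w ++ [b])) :
    a = b := by
  cases a <;> cases b <;> simp_all [IsRightSpecial]

lemma apply_add_length_eq_of_not_isRightSpecial {w : List Bool} {a : Bool}
    (hns : ¬ IsRightSpecial u w) (ha : IsFactor u (w ++ [a])) {j : ℕ}
    (hj : window u j w.length = w) : u (j + w.length) = a := by
  have := isFactor_window u j (w.length + 1)
  rw [window_succ, hj] at this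
  exact eq_of_isFactor_append_of_not_isRightSpecial hns this ha

lemma window_add_one_eq_of_not_isRightSpecial {i j k : ℕ} (h : window u i k = window u j k)
    (hns : ¬ IsRightSpecial u (window u i k)) : window u (i + 1) k = window u (j + 1) k := by
  have hi : IsFactor u (window u i k ++ [u (i + k)]) := by
    rw [← window_succ]; exact isFactor_window u i _
  have hj : IsFactor u (window u i k ++ [u (j + k)]) := by
    rw [h, ← window_succ]; exact isFactor_window u j _
  rw [window_add_one, window_add_one, h, eq_of_isFactor_append_of_not_isRightSpecial hns hi hj]

namespace IsSturmian

variable (hu : IsSturmian u)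
include hu

lemma ncard_isRightSpecial (n : ℕ) : {w | w.length = n ∧ IsRightSpecial u w}.ncard = 1 := by
  have := ncard_factorsOfLen_succ (hu.finite_factorsOfLen n)
  rw [← complexity_eq_ncard, ← complexity_eq_ncard, hu, hu] at this
  omega

lemma exists_isRightSpecial (n : ℕ) : ∃ w, w.length = n ∧ IsRightSpecial u w := by
  obtain ⟨w, hw⟩ := Set.ncard_eq_one.1 (hu.ncard_isRightSpecial n)
  exact ⟨w, (hw.symm ▸ rfl : w ∈ {w | w.length = n ∧ IsRightSpecial u w})⟩

lemma eq_of_isRightSpecial {w w' : List Bool} (hl : w.length = w'.length)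
    (hw : IsRightSpecial u w) (hw' : IsRightSpecial u w') : w = w' := by
  obtain ⟨x, hx⟩ := Set.ncard_eq_one.1 (hu.ncard_isRightSpecial w.length)
  have h₁ : w ∈ ({x} : Set (List Bool)) := hx ▸ ⟨rfl, hw⟩
  have h₂ : w' ∈ ({x} : Set (List Bool)) := hx ▸ ⟨hl.symm, hw'⟩
  exact h₁.trans h₂.symm

variable {B : List Bool} (hB : IsRightSpecial u B)
include hB

lemma window_add_eq_of_ne {i j d : ℕ} (h : window u i B.length = window u j B.length)
    (hfree : ∀ e < d, window u (i + e) B.length ≠ B) :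
    window u (i + d) B.length = window u (j + d) B.length := by
  induction d with
  | zero => simpa using h
  | succ d ih =>
    refine window_add_one_eq_of_not_isRightSpecial (ih fun e he => hfree e (by omega))
      fun hrs => hfree d (by omega) (hu.eq_of_isRightSpecial (by simp) hrs hB)

lemma exists_first_visit {W : List Bool} (hW : IsFactor u W) (hl : W.length = B.length) :
    ∃ A, ∀ j, window u j B.length = W →
      (∀ d < A, window u (j + d) B.length ≠ B) ∧ window u (j + A) B.length = B := by
  classical
  obtain ⟨j₀, hj₀⟩ := hW
  obtain ⟨i, hi, hiB⟩ := hu.exists_window_eq (hB.1.infix ⟨[], [false], rfl⟩) j₀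
  have hex : ∃ d, window u (j₀ + d) B.length = B := ⟨i - j₀, by rwa [Nat.add_sub_cancel' hi]⟩
  refine ⟨Nat.find hex, fun j hj => ?_⟩
  have hfree : ∀ d < Nat.find hex, window u (j₀ + d) B.length ≠ B :=
    fun d hd => Nat.find_min hex hd
  have h₀ : window u j₀ B.length = window u j B.length := by rw [hj, ← hl]; exact hj₀.symm
  have hsame : ∀ d ≤ Nat.find hex, window u (j₀ + d) B.length = window u (j + d) B.length :=
    fun d hd => hu.window_add_eq_of_ne hB h₀ fun e he => hfree e (by omega)
  exact ⟨fun d hd => hsame d hd.le ▸ hfree d hd, hsame _ le_rfl ▸ Nat.find_spec hex⟩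

end IsSturmian

end RightSpecial

section Balance

lemma List.exists_eq_append_cons_of_ne {α : Type*} :
    ∀ {x y : List α}, x.length = y.length → x ≠ y →
      ∃ p a b s s', a ≠ b ∧ x = p ++ a :: s ∧ y = p ++ b :: s'
  | [], [], _, h => absurd rfl h
  | a :: x, b :: y, hl, h => by
    by_cases hab : a = b
    · subst hab
      obtain ⟨p, a', b', s, s', hne, rfl, rfl⟩ :=
        List.exists_eq_append_cons_of_ne (by simpa using hl) (by simpa using h)
      exact ⟨a :: p, a', b', s, s', hne, rfl, rfl⟩
    · exact ⟨[], a, b, x, y, hab, rfl, rfl⟩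

lemma List.exists_eq_cons_append_singleton {α : Type*} :
    ∀ {x : List α}, 2 ≤ x.length → ∃ a x' c, x = a :: (x' ++ [c])
  | a :: b :: x, _ => by
    obtain ⟨x', c, hx⟩ := (List.eq_nil_or_concat' (b :: x)).resolve_left (by simp)
    exact ⟨a, x', c, by rw [hx]⟩

lemma List.exists_infix_of_count_add_two_le :
    ∀ (x y : List Bool), x.length = y.length → y.count true + 2 ≤ x.count true →
      ∃ t, true :: (t ++ [true]) <:+: x ∧ false :: (t ++ [false]) <:+: y := by
  intro x
  induction h : x.length using Nat.strong_induction_on generalizing x with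
  | _ n ih =>
  intro y hl hc
  have hx2 : 2 ≤ x.length := (by omega : 2 ≤ x.count true).trans List.count_le_length
  obtain ⟨a, x', c, rfl⟩ := List.exists_eq_cons_append_singleton hx2
  obtain ⟨b, y', d, rfl⟩ := List.exists_eq_cons_append_singleton (x := y) (by omega)
  simp only [List.length_cons, List.length_append] at h hl
  by_cases hsuf : (y' ++ [d]).count true + 2 ≤ (x' ++ [c]).count true
  · obtain ⟨t, h1, h2⟩ := ih _ (by simp; omega) _ rfl _ (by simp; omega) hsuf
    exact ⟨t, h1.trans (List.suffix_cons _ _).isInfix, h2.trans (List.suffix_cons _ _).isInfix⟩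
  by_cases hpre : (b :: y').count true + 2 ≤ (a :: x').count true
  · obtain ⟨t, h1, h2⟩ := ih _ (by simp; omega) _ rfl _ (by simp; omega) hpre
    refine ⟨t, h1.trans ?_, h2.trans ?_⟩ <;> exact (List.prefix_append _ _).isInfix
  -- neither the tails nor the initial parts differ by two, so `x = 1x'1` and `y = 0y'0`
  obtain ⟨rfl, rfl, rfl, rfl, hcount⟩ :
      a = true ∧ c = true ∧ b = false ∧ d = false ∧ x'.count true = y'.count true := by
    simp only [List.count_cons, List.count_append] at hc hsuf hpre
    cases a <;> cases b <;> cases c <;> cases d <;> simp at hc hsuf hpre ⊢ <;> omega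
  by_cases hxy : x' = y'
  · exact ⟨x', (List.infix_refl _).trans (by simp), by simp [hxy]⟩
  obtain ⟨p, a', b', s, s', hne, rfl, rfl⟩ := List.exists_eq_append_cons_of_ne (by omega) hxy
  cases a' <;> cases b' <;> simp only [ne_eq, not_true_eq_false] at hne
  · simp only [List.length_append, List.length_cons] at h hl
    simp only [List.count_append, List.count_cons_self, Nat.add_left_cancel_iff,
      List.count_cons_of_ne (Bool.false_ne_true)] at hcount
    obtain ⟨t, h1, h2⟩ := ih (s ++ [true]).length (by simp; omega) _ rfl (s' ++ [false])
      (by simp; omega) (by simp; omega)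
    exact ⟨t, h1.trans ⟨true :: (p ++ [false]), [], by simp⟩,
      h2.trans ⟨false :: (p ++ [true]), [], by simp⟩⟩
  · exact ⟨p, ⟨[], s ++ [true], by simp⟩, ⟨[], s' ++ [false], by simp⟩⟩

def IsBalanced (u : ℕ → Bool) : Prop :=
  ∀ n i j, (window u i n).count true ≤ (window u j n).count true + 1

variable {u : ℕ → Bool}

lemma exists_isFactor_of_not_isBalanced (h : ¬ IsBalanced u) :
    ∃ t, IsFactor u (true :: (t ++ [true])) ∧ IsFactor u (false :: (t ++ [false])) := by
  simp only [IsBalanced, not_forall, not_le] at h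
  obtain ⟨n, i, j, h⟩ := h
  obtain ⟨t, h1, h2⟩ := List.exists_infix_of_count_add_two_le _ (window u j n) (by simp) h
  exact ⟨t, (isFactor_window u i n).infix h1, (isFactor_window u j n).infix h2⟩

/-- Count the letters `x` in the two ways of cutting `x t x`, resp. `t !x`, around the
window of length `e`. -/
lemma window_ne_of_window_eq {x : Bool} {t : List Bool} {i e : ℕ} (he : e ≤ t.length + 1)
    (h₁ : window u i (t.length + 2) = x :: (t ++ [x])) (h₂ : u (i + e) = !x)
    (h₃ : window u (i + t.length + 2) e = window u i e) :
    window u (i + e + 1) (t.length + 1) ≠ t ++ [!x] := by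
  intro h₄
  have hsplit₁ : window u i (t.length + 2) =
      window u i e ++ (u (i + e) :: window u (i + e + 1) (t.length + 1 - e)) := by
    rw [← window_succ', ← window_add]; congr 1; omega
  have hsplit₂ : window u (i + e + 1) (t.length + 1) =
      window u (i + e + 1) (t.length + 1 - e) ++ window u (i + t.length + 2) e := by
    rw [show i + t.length + 2 = i + e + 1 + (t.length + 1 - e) by omega, ← window_add]
    congr 1; omega
  have c₁ := congrArg (List.count x) (hsplit₁.symm.trans h₁)
  have c₂ := congrArg (List.count x) (hsplit₂.symm.trans h₄)
  rw [h₂] at c₁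
  rw [h₃] at c₂
  cases x <;> simp [List.count_append] at c₁ c₂ <;> omega

lemma Nat.exists_last_le {P : ℕ → Prop} {a b : ℕ} (ha : P a) (hab : a ≤ b) :
    ∃ c, a ≤ c ∧ c ≤ b ∧ P c ∧ ∀ d, c < d → d ≤ b → ¬ P d := by
  classical
  exact ⟨Nat.findGreatest P b, Nat.le_findGreatest hab ha, Nat.findGreatest_le b,
    Nat.findGreatest_spec hab ha, fun d hd hdb => Nat.findGreatest_is_greatest hd hdb⟩

namespace IsSturmian

variable (hu : IsSturmian u) {x : Bool} {t : List Bool} (hB : IsRightSpecial u (x :: t))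
  {i r : ℕ} (hfree : ∀ d < r, window u (i + 1 + d) (t.length + 1) ≠ x :: t)
include hu hB hfree

lemma window_add_eq_of_first_return {j d₀ d : ℕ}
    (h : window u (i + 1 + d₀) (t.length + 1) = window u j (t.length + 1)) (hd : d ≤ r - d₀) :
    window u (i + 1 + d₀ + d) (t.length + 1) = window u (j + d) (t.length + 1) :=
  hu.window_add_eq_of_ne hB h fun e he => by rw [add_assoc]; exact hfree _ (by omega)

lemma injOn_of_first_return (hret : window u (i + 1 + r) (t.length + 1) = x :: t) :
    Set.InjOn (fun d => window u (i + 1 + d) (t.length + 1)) (Finset.range r) := by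
  have key : ∀ d₁ d₂, d₁ < d₂ → d₂ < r →
      window u (i + 1 + d₁) (t.length + 1) ≠ window u (i + 1 + d₂) (t.length + 1) := by
    intro d₁ d₂ hlt hd₂ h
    refine hfree (d₁ + (r - d₂)) (by omega) ?_
    rw [← add_assoc, ← window_add_eq_of_first_return hu hB hfree h.symm le_rfl,
      show i + 1 + d₂ + (r - d₂) = i + 1 + r by omega, hret]
  intro d₁ hd₁ d₂ hd₂ h
  simp only [Finset.coe_range, Set.mem_Iio] at hd₁ hd₂
  rcases lt_trichotomy d₁ d₂ with hlt | rfl | hlt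
  exacts [absurd h (key _ _ hlt hd₂), rfl, absurd h.symm (key _ _ hlt hd₁)]

-- Follow the path from the last visit of `x :: t` before an occurrence of the factor.
lemma factorsOfLen_subset_of_first_return
    (hret : window u (i + 1 + r) (t.length + 1) = x :: t) (hi : window u i (t.length + 1) = x :: t)
    (hboth : ∀ y, ∃ d < r, window u (i + 1 + d) (t.length + 1) = t ++ [y]) :
    factorsOfLen u (t.length + 1) ⊆
      ↑(insert (x :: t) ((Finset.range r).image fun d => window u (i + 1 + d) (t.length + 1))) := by
  intro w hw
  obtain ⟨y, hy, hyw⟩ := hu.exists_window_eq hw.2 i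
  obtain ⟨i₁, -, hi₁y, hi₁, hlast⟩ :=
    Nat.exists_last_le (P := fun j => window u j (t.length + 1) = x :: t) hi hy
  rw [← hyw, hw.1]
  rcases hi₁y.eq_or_lt with rfl | hlt
  · simp [hi₁]
  obtain ⟨d₀, hd₀, hd₀eq⟩ := hboth (u (i₁ + (t.length + 1)))
  have hf := fun d => window_add_eq_of_first_return hu hB hfree (d := d)
    (hd₀eq.trans (by rw [window_add_one, hi₁]; rfl))
  have hy' : y < i₁ + 1 + (r - d₀) := by
    by_contra
    refine hlast (i₁ + 1 + (r - d₀)) (by omega) (by omega) ?_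
    rw [← hf _ le_rfl, show i + 1 + d₀ + (r - d₀) = i + 1 + r by omega, hret]
  have := hf (y - (i₁ + 1)) (by omega)
  rw [show i₁ + 1 + (y - (i₁ + 1)) = y by omega, add_assoc (i + 1)] at this
  simpa using .inr ⟨_, by omega, this⟩

lemma first_return_eq_length (hret : window u (i + 1 + r) (t.length + 1) = x :: t)
    (hi : window u i (t.length + 1) = x :: t)
    (hboth : ∀ y, ∃ d < r, window u (i + 1 + d) (t.length + 1) = t ++ [y]) :
    r = t.length + 1 := by
  classical
  have hS := Set.Subset.antisymm (hu.factorsOfLen_subset_of_first_return hB hfree hret hi hboth)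
    fun w hw => by
      simp only [Finset.coe_insert, Finset.coe_image, Set.mem_insert_iff, Set.mem_image] at hw
      rcases hw with rfl | ⟨d, -, rfl⟩
      exacts [mem_factorsOfLen.2 ⟨i, hi⟩, mem_factorsOfLen.2 ⟨_, rfl⟩]
  have := hu (t.length + 1)
  rw [complexity_eq_ncard, hS, Set.ncard_coe_finset, Finset.card_insert_of_notMem,
    Finset.card_image_of_injOn (hu.injOn_of_first_return hB hfree hret),
    Finset.card_range] at this
  · omega
  · simpa using fun d hd => hfree d hd

end IsSturmian

namespace IsSturmian

variable (hu : IsSturmian u) {x : Bool} {t : List Bool} (hB : IsRightSpecial u (x :: t))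
include hu hB

lemma not_isFactor_of_isRightSpecial : ¬ IsFactor u ((!x) :: (t ++ [!x])) := by
  intro hZ
  have hZB : (!x) :: t ≠ x :: t := by simp
  have hTB : t ++ [!x] ≠ x :: t := fun h => by simpa using congrArg (List.count x) h
  have hZnext : ∀ j, window u j (t.length + 1) = (!x) :: t →
      u j = !x ∧ window u (j + 1) (t.length + 1) = t ++ [!x] := by
    intro j hj
    have hnext := apply_add_length_eq_of_not_isRightSpecial
      (fun hrs => hZB (hu.eq_of_isRightSpecial rfl hrs hB)) (by simpa using hZ) hj
    simp only [List.length_cons] at hnext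
    rw [window_succ'] at hj
    simp only [List.cons.injEq] at hj
    exact ⟨hj.1, by rw [window_add_one, window_succ', hj.1, hj.2, hnext]; rfl⟩
  obtain ⟨A, hA⟩ := hu.exists_first_visit hB (W := t ++ [!x]) (hZ.infix ⟨[!x], [], by simp⟩)
    (by simp)
  simp only [List.length_cons] at hA
  obtain ⟨iB, hiB⟩ := hB.1.infix (w' := x :: t) ⟨[], [false], rfl⟩
  obtain ⟨jZ, hjZ, hZjZ⟩ := hu.exists_window_eq (hZ.infix (w' := (!x) :: t) ⟨[], [!x], by simp⟩) iB
  obtain ⟨i, -, hijZ, hi, hlast⟩ :=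
    Nat.exists_last_le (P := fun j => window u j (t.length + 1) = x :: t) hiB.symm hjZ
  have hlt : i < jZ := lt_of_le_of_ne hijZ (by rintro rfl; exact hZB (hZjZ.symm.trans hi))
  obtain ⟨hxjZ, hT⟩ := hZnext jZ hZjZ
  obtain ⟨hfreeZ, hretZ⟩ := hA (jZ + 1) hT
  have hA0 : 0 < A := Nat.pos_of_ne_zero fun h => hTB (hT.symm.trans (by simpa [h] using hretZ))
  -- otherwise the path from `i + 1` would return to `x t` before `jZ + 1 + A`
  have hix : u (i + (t.length + 1)) = x := by
    by_contra hne
    obtain ⟨-, hret⟩ := hA (i + 1) (by rw [window_add_one, hi, Bool.eq_not.2 hne]; rfl)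
    have : jZ < i + 1 + A := by
      by_contra
      exact hlast (i + 1 + A) (by omega) (by omega) hret
    exact hfreeZ (i + A - jZ) (by omega) (by rwa [show jZ + 1 + (i + A - jZ) = i + 1 + A by omega])
  have hr := hu.first_return_eq_length hB (r := jZ - i + A)
    (fun d hd => by
      by_cases h : i + 1 + d ≤ jZ
      · exact hlast _ (by omega) h
      · rw [show i + 1 + d = jZ + 1 + (d - (jZ - i)) by omega]
        exact hfreeZ _ (by omega))
    (by rwa [show i + 1 + (jZ - i + A) = jZ + 1 + A by omega]) hi
    (fun y => by
      by_cases hy : y = x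
      · exact ⟨0, by omega, by rw [window_add_one, hi, hix, hy]; rfl⟩
      · refine ⟨jZ - i, by omega, ?_⟩
        rw [show i + 1 + (jZ - i) = jZ + 1 by omega, hT, Bool.eq_not.2 hy])
  refine window_ne_of_window_eq (u := u) (x := x) (t := t) (i := i) (e := jZ - i) (by omega) ?_
    (by rwa [Nat.add_sub_cancel' hijZ]) ?_ (by rwa [Nat.add_sub_cancel' hijZ])
  · rw [window_succ, hi, hix]; rfl
  · have hi' : window u (i + t.length + 2) (t.length + 1) = window u i (t.length + 1) := by
      rw [hi, show i + t.length + 2 = jZ + 1 + A by omega, hretZ]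
    rw [← window_take u (show jZ - i ≤ t.length + 1 by omega), hi', window_take]
    omega

end IsSturmian

lemma IsSturmian.isBalanced (hu : IsSturmian u) : IsBalanced u := by
  by_contra h
  obtain ⟨t, h₁, h₀⟩ := exists_isFactor_of_not_isBalanced h
  obtain ⟨_ | ⟨x, t'⟩, hl, hw⟩ := hu.exists_isRightSpecial (t.length + 1)
  · simp at hl
  have ht' : IsRightSpecial u t' :=
    ⟨hw.1.infix ⟨[x], [], by simp⟩, hw.2.infix ⟨[x], [], by simp⟩⟩
  have ht : IsRightSpecial u t :=
    ⟨h₀.infix ⟨[false], [], by simp⟩, h₁.infix ⟨[true], [], by simp⟩⟩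
  obtain rfl := hu.eq_of_isRightSpecial (by simpa using hl) ht' ht
  cases x
  exacts [hu.not_isFactor_of_isRightSpecial hw h₁, hu.not_isFactor_of_isRightSpecial hw h₀]

end Balance

section Count

variable (u : ℕ → Bool)

lemma count_window_succ_le (i n : ℕ) :
    (window u i (n + 1)).count true ≤ (window u i n).count true + 1 := by
  rw [window_succ, List.count_append]
  cases u (i + n) <;> simp

lemma count_window_mono (i : ℕ) {m n : ℕ} (h : m ≤ n) :
    (window u i m).count true ≤ (window u i n).count true := by
  rw [← Nat.add_sub_cancel' h, window_add, List.count_append]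
  omega

variable {u}

lemma count_window_eq_zero {i n : ℕ} (h : ∀ d < n, u (i + d) = false) :
    (window u i n).count true = 0 := by
  rw [window_eq_replicate_iff.2 h, List.count_replicate]; rfl

lemma IsBalanced.comp_add (hu : IsBalanced u) (m : ℕ) : IsBalanced fun k => u (k + m) := by
  intro n i j
  simpa [window, add_right_comm] using hu n (i + m) (j + m)

end Count

section Gap

def IsGap (e : ℕ → Bool) (c g : ℕ) : Prop :=
  0 < g ∧ e c = true ∧ e (c + g) = true ∧ ∀ s, 0 < s → s < g → e (c + s) = false

variable {e : ℕ → Bool}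

lemma isGap_comp_add_one {c g : ℕ} : IsGap (fun k => e (k + 1)) c g ↔ IsGap e (c + 1) g := by
  simp [IsGap, add_right_comm]

lemma IsGap.count_window {c g : ℕ} (h : IsGap e c g) : (window e c g).count true = 1 := by
  obtain ⟨hg, hc, -, hzero⟩ := h
  obtain ⟨g, rfl⟩ := Nat.exists_eq_add_of_lt hg
  rw [zero_add, window_succ', List.count_cons, hc,
    count_window_eq_zero fun d hd => by rw [add_assoc]; exact hzero _ (by omega) (by omega)]
  rfl

namespace IsSturmian

variable (he : IsSturmian e)
include he

lemma exists_eq_true (N : ℕ) : ∃ k, N ≤ k ∧ e k = true := by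
  by_contra! h
  exact he.not_isEventuallyPeriodic ⟨N, 1, one_pos, fun k hk => by
    simp only [Bool.not_eq_true] at h; rw [h k hk, h (k + 1) (by omega)]⟩

lemma exists_isGap {c : ℕ} (hc : e c = true) : ∃ g, IsGap e c g := by
  classical
  have hex : ∃ g, 0 < g ∧ e (c + g) = true := by
    obtain ⟨k, hk, hk'⟩ := he.exists_eq_true (c + 1)
    exact ⟨k - c, by omega, by rwa [Nat.add_sub_cancel' (by omega)]⟩
  refine ⟨Nat.find hex, (Nat.find_spec hex).1, hc, (Nat.find_spec hex).2, fun s hs hsg => ?_⟩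
  simpa [hs] using Nat.find_min hex hsg

-- If all gaps from `N` on were equal, `e` would be periodic from its first `true` past `N`.
lemma exists_isGap_lt (N : ℕ) :
    ∃ c₁ c₂ g₁ g₂, N ≤ c₁ ∧ N ≤ c₂ ∧ IsGap e c₁ g₁ ∧ IsGap e c₂ g₂ ∧ g₁ < g₂ := by
  by_contra! hno
  obtain ⟨c₀, hc₀, hc₀'⟩ := he.exists_eq_true N
  obtain ⟨g, hg⟩ := he.exists_isGap hc₀'
  have hall : ∀ c g', N ≤ c → IsGap e c g' → g' = g := fun c g' hc h =>
    le_antisymm (hno _ _ _ _ hc₀ hc hg h) (hno _ _ _ _ hc hc₀ h hg)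
  refine he.not_isEventuallyPeriodic ⟨c₀, g, hg.1, fun p hp => ?_⟩
  obtain ⟨c, hc, hcp, hct, hlast⟩ := Nat.exists_last_le (P := fun k => e k = true) hc₀' hp
  obtain ⟨g₁, hg₁⟩ := he.exists_isGap hct
  rw [hall c g₁ (by omega) hg₁] at hg₁
  obtain ⟨g₂, hg₂⟩ := he.exists_isGap hg₁.2.2.1
  rw [hall _ g₂ (by omega) hg₂] at hg₂
  have hpc : p < c + g := by
    by_contra
    exact hlast (c + g) (by have := hg.1; omega) (by omega) hg₁.2.2.1
  rcases hcp.eq_or_lt with rfl | hlt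
  · rw [hct, hg₁.2.2.1]
  · have h₁ := hg₁.2.2.2 (p - c) (by omega) (by omega)
    have h₂ := hg₂.2.2.2 (p - c) (by omega) (by omega)
    rw [show c + (p - c) = p by omega] at h₁
    rw [show c + g + (p - c) = p + g by omega] at h₂
    rw [h₁, h₂]

end IsSturmian

end Gap

section BlockWord

variable {L : ℕ} {δ : ℕ → Bool} {H : ℕ → ℕ} (hH : ∀ k, H (k + 1) = H k + L + (δ k).toNat)
include hH

lemma blockStart_add (k r : ℕ) : H (k + r) = H k + r * L + (window δ k r).count true := by
  induction r with
  | zero => simp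
  | succ r ih =>
    rw [← add_assoc, hH, ih, window_succ, List.count_append]
    cases δ (k + r) <;> simp <;> ring

lemma blockStart_strictMono (hL : 0 < L) : StrictMono H :=
  strictMono_nat_of_lt_succ fun k => by rw [hH]; omega

lemma exists_blockIndex (hL : 0 < L) (x : ℕ) : ∃ a, (∀ k < a, H k < x) ∧ x ≤ H a := by
  classical
  have hex : ∃ a, x ≤ H a := ⟨x, (blockStart_strictMono hH hL).le_apply⟩
  exact ⟨Nat.find hex, fun k hk => not_le.1 (Nat.find_min hex hk), Nat.find_spec hex⟩

variable {W : ℕ → Bool} (hW : ∀ p, H 0 ≤ p → (W p = true ↔ ∃ k, H k = p ∧ δ k = true))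
include hW

lemma count_window_eq (hL : 0 < L) {i a : ℕ} (hi : H 0 ≤ i) (ha : ∀ k < a, H k < i)
    (ha' : i ≤ H a) : ∀ n b, (∀ k < b, H k < i + n) → i + n ≤ H b →
      (window W i n).count true = (window δ a (b - a)).count true := by
  have hmono := blockStart_strictMono hH hL
  intro n
  induction n with
  | zero =>
    intro b hb hb'
    obtain rfl : b = a := by
      by_contra hne
      rcases Nat.lt_or_gt_of_ne hne with h | h
      · exact absurd (ha _ h) (by simp; omega)
      · exact absurd (hb _ h) (by simp; omega)
    simp
  | succ n ih =>
    intro b hb hb'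
    rw [window_succ, List.count_append]
    by_cases hlast : ∃ b', b = b' + 1 ∧ H b' = i + n
    · obtain ⟨b', rfl, hb'n⟩ := hlast
      have hab' : a ≤ b' := by
        by_contra h; have := ha b' (by omega); omega
      rw [ih b' (fun k hk => hb'n ▸ hmono hk) hb'n.ge,
        show b' + 1 - a = b' - a + 1 by omega, window_succ, List.count_append,
        Nat.add_sub_cancel' hab']
      congr 1
      have : W (i + n) = δ b' := by
        rw [Bool.eq_iff_iff, hW _ (by omega)]
        exact ⟨fun ⟨k, hk, hδk⟩ => hmono.injective (hk.trans hb'n.symm) ▸ hδk,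
          fun h => ⟨b', hb'n, h⟩⟩
      rw [this]
    · simp only [not_exists, not_and] at hlast
      have hne : ∀ k < b, H k ≠ i + n := by
        intro k hk hkn
        obtain ⟨b', rfl⟩ := Nat.exists_eq_add_of_lt hk
        refine hlast (k + b') (by omega) ?_
        have := hb (k + b') (by omega)
        have := hmono.monotone (show k ≤ k + b' by omega)
        omega
      rw [ih b (fun k hk => by have := hb k hk; have := hne k hk; omega) (by omega)]
      have : W (i + n) = false := by
        rw [← Bool.not_eq_true, hW _ (by omega)]
        rintro ⟨k, hk, -⟩
        rcases lt_or_ge k b with h | h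
        · exact hne k h hk
        · have := hmono.monotone h; omega
      simp [this]

lemma count_window_le_add_two (hL : 0 < L) (hδ : IsBalanced δ) {i j : ℕ} (hi : H 0 < i)
    (hj : H 0 < j) (n : ℕ) : (window W i n).count true ≤ (window W j n).count true + 2 := by
  have hmono := blockStart_strictMono hH hL
  obtain ⟨a, ha, ha'⟩ := exists_blockIndex hH hL i
  obtain ⟨a', ha₁, ha₁'⟩ := exists_blockIndex hH hL (i + n)
  obtain ⟨b, hb, hb'⟩ := exists_blockIndex hH hL j
  obtain ⟨b', hb₁, hb₁'⟩ := exists_blockIndex hH hL (j + n)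
  have hb0 : 0 < b := Nat.pos_of_ne_zero fun h => by subst h; omega
  have haa' : a ≤ a' := by by_contra h; have := ha a' (by omega); omega
  have hbb' : b ≤ b' := by by_contra h; have := hb b' (by omega); omega
  rw [count_window_eq hH hW hL hi.le ha ha' n a' ha₁ ha₁',
    count_window_eq hH hW hL hj.le hb hb' n b' hb₁ hb₁']
  rcases le_or_gt (a' - a) (b' - b + 1) with hR | hR
  · calc (window δ a (a' - a)).count true
        ≤ (window δ a (b' - b + 1)).count true := count_window_mono δ a hR
      _ ≤ (window δ a (b' - b)).count true + 1 := count_window_succ_le δ a _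
      _ ≤ (window δ b (b' - b)).count true + 2 := by have := hδ (b' - b) a b; omega
  · exfalso
    have h₁ := blockStart_add hH a (b' - b + 1)
    have h₂ := blockStart_add hH (b - 1) (b' - b + 1)
    rw [show b - 1 + (b' - b + 1) = b' by omega] at h₂
    have h₃ := ha₁ (a + (b' - b + 1)) (by omega)
    have h₄ := hb (b - 1) (by omega)
    have := hδ (b' - b + 1) (b - 1) a
    omega

lemma exists_count_window_eq_two_and_zero (hL : 2 ≤ L) {c₁ c₂ g₁ g₂ : ℕ}
    (h₁ : IsGap δ c₁ g₁) (h₂ : IsGap δ c₂ g₂) (hg : g₁ < g₂) :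
    ∃ i j n, (window W i n).count true = 2 ∧ (window W j n).count true = 0 := by
  have hmono := blockStart_strictMono hH (by omega)
  have hD : H (c₁ + g₁) = H c₁ + (g₁ * L + 1) := by
    rw [blockStart_add hH, h₁.count_window, add_assoc]
  refine ⟨H c₁, H c₂ + 1, g₁ * L + 2, ?_, ?_⟩
  · rw [count_window_eq hH hW (by omega) (hmono.monotone (Nat.zero_le _))
      (fun k hk => hmono hk) le_rfl _ (c₁ + g₁ + 1)
      (fun k hk => by have := hmono.monotone (show k ≤ c₁ + g₁ by omega); omega)
      (by have := hmono (show c₁ + g₁ < c₁ + g₁ + 1 by omega); omega),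
      show c₁ + g₁ + 1 - c₁ = g₁ + 1 by omega, window_succ, List.count_append,
      h₁.count_window, h₁.2.2.1]
    rfl
  · obtain ⟨b, hb, hb'⟩ := exists_blockIndex hH (by omega) (H c₂ + 1 + (g₁ * L + 2))
    have hbg : b ≤ c₂ + g₂ := by
      by_contra h
      have hlt := hb (c₂ + g₂) (by omega)
      have hle := hmono.monotone (show c₂ + (g₁ + 1) ≤ c₂ + g₂ by omega)
      have hadd := blockStart_add hH c₂ (g₁ + 1)
      have hone : 1 ≤ (window δ c₂ (g₁ + 1)).count true := by
        rw [window_succ', List.count_cons, h₂.2.1]; simp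
      rw [add_mul, one_mul] at hadd
      omega
    rw [count_window_eq hH hW (a := c₂ + 1) (by omega)
      (by have := hmono.monotone (Nat.zero_le c₂); omega)
      (fun k hk => by have := hmono.monotone (show k ≤ c₂ by omega); omega)
      (by have := hmono (show c₂ < c₂ + 1 by omega); omega) _ b hb hb']
    exact count_window_eq_zero fun d hd => by
      rw [add_assoc]; exact h₂.2.2.2 _ (by omega) (by omega)

end BlockWord
lemma IsSturmian.comp_decide_eq_one {ε : ℕ → ℕ} (hε : IsSturmian ε) (h : ∀ i, ε i ≤ 1) :
    IsSturmian fun k => decide (ε k = 1) := by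
  refine hε.comp (f := fun a => decide (a = 1)) ?_
  rintro _ ⟨i, rfl⟩ _ ⟨j, rfl⟩ hij
  have := h i
  have := h j
  simp only [decide_eq_decide] at hij
  omega

lemma window_caFInf_eq {A B : Type*} {f : List A → B} {r : ℕ} {u : ℕ → A} {i j n : ℕ}
    (h : window u i (n + r) = window u j (n + r)) :
    window (caFInf f r u) i n = window (caFInf f r u) j n := by
  refine window_eq_window_iff.2 fun d hd => ?_
  have key : ∀ k, window u (k + d) r = ((window u k (n + r)).drop d).take r := fun k => by
    rw [window_drop, window_take _ (by omega)]
  simp only [caFInf, key, h]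

lemma IsSturmian.exists_window_caFInf_eq {A B : Type*} {u : ℕ → A} (hu : IsSturmian u)
    (f : List A → B) (r : ℕ) {w : List B} (hw : IsFactor (caFInf f r u) w) (N : ℕ) :
    ∃ i, N ≤ i ∧ window (caFInf f r u) i w.length = w := by
  obtain ⟨j, hj⟩ := hw
  obtain ⟨i, hi, hij⟩ := hu.exists_window_eq (isFactor_window u j (w.length + r)) N
  exact ⟨i, hi, (window_caFInf_eq (by simpa using hij)).trans hj.symm⟩

lemma StrictMono.exists_le_lt {f : ℕ → ℕ} (hf : StrictMono f) {p : ℕ} (hp : f 0 ≤ p) :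
    ∃ k, f k ≤ p ∧ p < f (k + 1) := by
  classical
  have hex : ∃ m, p < f m := ⟨p + 1, (hf.le_apply).trans_lt' (by omega)⟩
  obtain ⟨k, hk⟩ : ∃ k, Nat.find hex = k + 1 := Nat.exists_eq_succ_of_ne_zero fun h => by
    have := Nat.find_spec hex; rw [h] at this; omega
  exact ⟨k, not_lt.1 (Nat.find_min hex (by omega)), hk ▸ Nat.find_spec hex⟩

/-- `bPos l₀ l ε k` is the position of the `k`-th letter `b` (counted from `0`) in
`a^l₀ b a^(l+ε₁) b a^(l+ε₂) b ⋯`. -/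
def bPos (l₀ l : ℕ) (ε : ℕ → ℕ) : ℕ → ℕ
  | 0 => l₀
  | k + 1 => bPos l₀ l ε k + (l + 1 + ε (k + 1))

section SturmianPrefix

variable {l₀ l : ℕ} {ε : ℕ → ℕ}

lemma bPos_strictMono (l₀ l : ℕ) (ε : ℕ → ℕ) : StrictMono (bPos l₀ l ε) :=
  strictMono_nat_of_lt_succ fun k => by simp only [bPos]; omega

lemma sturmPrefix_succ (n : ℕ) : sturmPrefix l₀ l ε (n + 1) =
    sturmPrefix l₀ l ε n ++ (List.replicate (l + ε (n + 1)) true ++ [false]) := by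
  simp [sturmPrefix, List.range_succ]

lemma length_sturmPrefix (n : ℕ) : (sturmPrefix l₀ l ε n).length = bPos l₀ l ε n + 1 := by
  induction n with
  | zero => simp [sturmPrefix, bPos]
  | succ n ih => rw [sturmPrefix_succ]; simp [ih, bPos]; omega

variable {v : ℕ → Bool}
  (hv : ∀ n, sturmPrefix l₀ l ε n = window v 0 (sturmPrefix l₀ l ε n).length)
include hv

lemma window_bPos_add_one (n : ℕ) :
    window v (bPos l₀ l ε n + 1) (l + ε (n + 1)) = List.replicate (l + ε (n + 1)) true ∧
      v (bPos l₀ l ε (n + 1)) = false := by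
  have h := hv (n + 1)
  have h₀ := hv n
  rw [length_sturmPrefix] at h h₀
  rw [show bPos l₀ l ε (n + 1) + 1 = (bPos l₀ l ε n + 1) + (l + ε (n + 1) + 1) by
    simp only [bPos]; omega, window_add, zero_add, sturmPrefix_succ, ← h₀] at h
  have h' := (List.append_cancel_left h).symm
  rw [window_succ] at h'
  obtain ⟨h₁, h₂⟩ := List.append_inj' h' rfl
  refine ⟨h₁, ?_⟩
  simp only [List.cons.injEq, and_true] at h₂
  rw [← h₂]; simp only [bPos]; congr 1; omega

lemma apply_bPos_eq_false (k : ℕ) : v (bPos l₀ l ε k) = false := by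
  cases k with
  | zero =>
    have h := hv 0
    rw [length_sturmPrefix, window_succ] at h
    simp only [sturmPrefix, List.range_zero, List.map_nil, List.flatten_nil,
      List.append_nil] at h
    simpa [bPos] using (List.append_inj' h (by simp)).2.symm
  | succ k => exact (window_bPos_add_one hv k).2

lemma apply_eq_true_of_bPos_lt {k p : ℕ} (h₁ : bPos l₀ l ε k < p) (h₂ : p < bPos l₀ l ε (k + 1)) :
    v p = true := by
  have := window_eq_replicate_iff.1 (window_bPos_add_one hv k).1 (p - (bPos l₀ l ε k + 1))
    (by simp only [bPos] at h₂; omega)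
  rwa [Nat.add_sub_cancel' h₁] at this

lemma caFInf_sturmRule_eq_true_iff (hε : ∀ i, ε i ≤ 1) {i : ℕ} (hi : l₀ < i) :
    caFInf (sturmRule l) (l + 1) v i = true ↔ ∃ k, bPos l₀ l ε k + 1 = i ∧ ε (k + 1) = 1 := by
  have hrule : caFInf (sturmRule l) (l + 1) v i = true ↔ ∀ d < l + 1, v (i + d) = true := by
    simp [caFInf, sturmRule, window_eq_replicate_iff]
  rw [hrule]
  obtain ⟨k, hk₁, hk₂⟩ := (bPos_strictMono l₀ l ε).exists_le_lt (p := i - 1)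
    (by simp [bPos]; omega)
  simp only [bPos] at hk₂
  constructor
  · intro h
    have : i + l < bPos l₀ l ε (k + 1) := by
      by_contra hle
      have := h (bPos l₀ l ε (k + 1) - i) (by simp only [bPos] at hle ⊢; omega)
      rw [Nat.add_sub_cancel' (by simp only [bPos]; omega), apply_bPos_eq_false hv] at this
      exact Bool.false_ne_true this
    simp only [bPos] at this
    have := hε (k + 1)
    exact ⟨k, by omega, by omega⟩
  · rintro ⟨k', rfl, hk'⟩ d hd
    exact apply_eq_true_of_bPos_lt hv (k := k') (by omega) (by simp only [bPos]; omega)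

lemma one_le_of_isFactor_true_true (hε : ∀ i, ε i ≤ 1) (hu : IsSturmian v)
    (haa : IsFactor v [true, true]) : 1 ≤ l := by
  obtain ⟨i, hi, hw⟩ := hu.exists_window_eq haa l₀
  obtain ⟨hvi, hvi'⟩ : v i = true ∧ v (i + 1) = true := by
    simpa [window, List.range_succ] using hw
  obtain ⟨k, hk₁, hk₂⟩ := (bPos_strictMono l₀ l ε).exists_le_lt (p := i)
    (by simpa [bPos])
  have h₁ : bPos l₀ l ε k ≠ i := fun h => by simp [← h, apply_bPos_eq_false hv] at hvi
  have h₂ : bPos l₀ l ε (k + 1) ≠ i + 1 := fun h => by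
    simp [← h, apply_bPos_eq_false hv] at hvi'
  simp only [bPos] at hk₂ h₂
  have := hε (k + 1)
  omega

end SturmianPrefix

lemma abs_count_sub_count_le_two {w₁ w₂ : List Bool} (hl : w₁.length = w₂.length)
    (h₁₂ : w₁.count true ≤ w₂.count true + 2) (h₂₁ : w₂.count true ≤ w₁.count true + 2)
    (x : Bool) : |(w₁.count x : ℤ) - w₂.count x| ≤ 2 := by
  have := List.count_false_add_count_true w₁
  have := List.count_false_add_count_true w₂
  rw [abs_sub_le_iff]
  cases x <;> constructor <;> omega

theorem ca_sturmian_two_balanced_general (l₀ l : ℕ) (ε : ℕ → ℕ) (hε : ∀ i, ε i ≤ 1)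
    (hεSturm : ∀ n, complexity ε n = n + 1)
    (v : ℕ → Bool)
    (hv : ∀ n : ℕ, sturmPrefix l₀ l ε n = window v 0 (sturmPrefix l₀ l ε n).length)
    (hSturm : ∀ n, complexity v n = n + 1)
    (haa : IsFactor v [true, true]) :
    (∀ (x : Bool) (v₁ v₂ : List Bool),
      IsFactor (caFInf (sturmRule l) (l + 1) v) v₁ →
      IsFactor (caFInf (sturmRule l) (l + 1) v) v₂ →
      v₁.length = v₂.length →
      |(v₁.count x : ℤ) - (v₂.count x : ℤ)| ≤ 2) ∧
    (∃ (x : Bool) (v₁ v₂ : List Bool),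
      IsFactor (caFInf (sturmRule l) (l + 1) v) v₁ ∧
      IsFactor (caFInf (sturmRule l) (l + 1) v) v₂ ∧
      v₁.length = v₂.length ∧
      |(v₁.count x : ℤ) - (v₂.count x : ℤ)| = 2) := by
  set W := caFInf (sturmRule l) (l + 1) v
  -- Past the first `b`, `W` has an `a` at the start `H k` of the `(k+1)`-th run of `v` iff
  -- this run is `a^(l+1)`, i.e. iff `δ k`.
  set H : ℕ → ℕ := fun k => bPos l₀ l ε k + 1
  set δ : ℕ → Bool := fun k => decide (ε (k + 1) = 1)
  have hH : ∀ k, H (k + 1) = H k + (l + 1) + (δ k).toNat := fun k => by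
    have := hε (k + 1)
    simp only [H, δ, bPos]
    interval_cases ε (k + 1) <;> simp <;> omega
  have hW : ∀ p, H 0 ≤ p → (W p = true ↔ ∃ k, H k = p ∧ δ k = true) := fun p hp => by
    simp only [H, bPos] at hp
    simpa [H, δ, and_comm] using caFInf_sturmRule_eq_true_iff hv hε (i := p) (by omega)
  have he := IsSturmian.comp_decide_eq_one hεSturm hε
  have hbound : ∀ w₁ w₂, IsFactor W w₁ → IsFactor W w₂ → w₁.length = w₂.length →
      w₁.count true ≤ w₂.count true + 2 := by
    intro w₁ w₂ h₁ h₂ hl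
    obtain ⟨i, hi, hw₁⟩ := IsSturmian.exists_window_caFInf_eq hSturm _ _ h₁ (H 0 + 1)
    obtain ⟨j, hj, hw₂⟩ := IsSturmian.exists_window_caFInf_eq hSturm _ _ h₂ (H 0 + 1)
    rw [← hw₁, ← hw₂, hl]
    exact count_window_le_add_two hH hW (by omega) (he.isBalanced.comp_add 1) (by omega)
      (by omega) _
  refine ⟨fun x w₁ w₂ h₁ h₂ hl => abs_count_sub_count_le_two hl (hbound _ _ h₁ h₂ hl)
    (hbound _ _ h₂ h₁ hl.symm) x, ?_⟩
  obtain ⟨c₁, c₂, g₁, g₂, hc₁, hc₂, h₁, h₂, hg⟩ := he.exists_isGap_lt 1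
  obtain ⟨i, j, n, hi, hj⟩ := exists_count_window_eq_two_and_zero hH hW
    (by have := one_le_of_isFactor_true_true hv hε hSturm haa; omega)
    (isGap_comp_add_one.2 (by rwa [Nat.sub_add_cancel hc₁]))
    (isGap_comp_add_one.2 (by rwa [Nat.sub_add_cancel hc₂])) hg
  exact ⟨true, _, _, isFactor_window W i n, isFactor_window W j n, by simp,
    by rw [hi, hj]; norm_num⟩

theorem ca_sturmian_two_balanced (l₀ l : ℕ) (ε : ℕ → ℕ) (hε : ∀ i, ε i ≤ 1)
    (hεSturm : ∀ n, complexity ε n = n + 1)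
    (hl₀ : l₀ ≤ l + 1)
    (v : ℕ → Bool)
    (hv : ∀ n : ℕ, sturmPrefix l₀ l ε n = window v 0 (sturmPrefix l₀ l ε n).length)
    (hSturm : ∀ n, complexity v n = n + 1)
    (haa : IsFactor v [true, true]) :
    (∀ (x : Bool) (v₁ v₂ : List Bool),
      IsFactor (caFInf (sturmRule l) (l + 1) v) v₁ →
      IsFactor (caFInf (sturmRule l) (l + 1) v) v₂ →
      v₁.length = v₂.length →
      |(v₁.count x : ℤ) - (v₂.count x : ℤ)| ≤ 2) ∧
    (∃ (x : Bool) (v₁ v₂ : List Bool),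
      IsFactor (caFInf (sturmRule l) (l + 1) v) v₁ ∧
      IsFactor (caFInf (sturmRule l) (l + 1) v) v₂ ∧
      v₁.length = v₂.length ∧
      |(v₁.count x : ℤ) - (v₂.count x : ℤ)| = 2) :=
  ca_sturmian_two_balanced_general l₀ l ε hε hεSturm v hv hSturm haa
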